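/- (Worked example, K = 7 and m = 2, instance of Lemma 2.) Under the mth-order Markov model with K = 7 and m = 2, the response indicator R₄ is conditionally independent of O₇ given (Y₂, Y₃, Y₄, O₅, O₆). -/

import Mathlib

open scoped Classical BigOperators

namespace MRM

/-- Observed datum at index `j`: `some (y j)` if `r j = true` (observed), otherwise `none`
(missing, i.e. the value `?`). -/
def obs {K : ℕ} (y r : Fin K → Bool) (j : Fin K) : Option Bool :=
  if r j then some (y j) else none

/-- Probability of an event under the joint pmf `p` on outcomes and response indicators. -/
noncomputable def Pr {K : ℕ} (p : (Fin K → Bool) → (Fin K → Bool) → ℝ)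
    (E : (Fin K → Bool) → (Fin K → Bool) → Prop) : ℝ :=
  ∑ y : Fin K → Bool, ∑ r : Fin K → Bool, if E y r then p y r else 0

/-- Conditional probability `P(A | C)` under `p`. -/
noncomputable def cPr {K : ℕ} (p : (Fin K → Bool) → (Fin K → Bool) → ℝ)
    (A C : (Fin K → Bool) → (Fin K → Bool) → Prop) : ℝ :=
  Pr p (fun y r => A y r ∧ C y r) / Pr p C

/-- Event: the outcomes at the 1-based positions `lo ≤ pos ≤ hi` take the values `yv pos`.
(If `hi < lo`, or the window is out of range, this is the trivial event, matching the
convention that a vector whose lower index exceeds its upper index is the null vector.) -/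
def Yeq {K : ℕ} (lo hi : ℕ) (yv : ℕ → Bool) :
    (Fin K → Bool) → (Fin K → Bool) → Prop :=
  fun y _ => ∀ j : Fin K, lo ≤ j.1 + 1 → j.1 + 1 ≤ hi → y j = yv (j.1 + 1)

/-- Event: the response indicators at positions `lo ≤ pos ≤ hi` take the values `rv pos`. -/
def Req {K : ℕ} (lo hi : ℕ) (rv : ℕ → Bool) :
    (Fin K → Bool) → (Fin K → Bool) → Prop :=
  fun _ r => ∀ j : Fin K, lo ≤ j.1 + 1 → j.1 + 1 ≤ hi → r j = rv (j.1 + 1)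

/-- Event: the observed data at positions `lo ≤ pos ≤ hi` take the values `ov pos`. -/
def Oeq {K : ℕ} (lo hi : ℕ) (ov : ℕ → Option Bool) :
    (Fin K → Bool) → (Fin K → Bool) → Prop :=
  fun y r => ∀ j : Fin K, lo ≤ j.1 + 1 → j.1 + 1 ≤ hi → obs y r j = ov (j.1 + 1)

/-- The `m`-th order Markov model:
`p(y, r) = ∏ₖ aₖ(yₖ | ȳᵐₖ) · bₖ(rₖ | ȳᵐₖ, yₖ, o̲ᵐₖ)`, where `aₖ` and `bₖ` are strictly
positive conditional pmfs in their first argument, `aₖ` depends only on the outcomes at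
1-based positions `max(1, k − m), …, k`, and `bₖ` depends only on `rₖ`, the outcomes at
positions `max(1, k − m), …, k` and the observed data at positions `k + 1, …, min(k + m, K)`.
Indices of `Fin K` are 0-based, so the 1-based paper position of `k : Fin K` is `k.1 + 1`. -/
structure Markov (K m : ℕ) where
  p : (Fin K → Bool) → (Fin K → Bool) → ℝ
  a : Fin K → (Fin K → Bool) → ℝ
  b : Fin K → (Fin K → Bool) → (Fin K → Bool) → ℝ
  a_pos : ∀ k y, 0 < a k y
  b_pos : ∀ k y r, 0 < b k y r
  a_pmf : ∀ (k : Fin K) (y : Fin K → Bool), ∑ v : Bool, a k (Function.update y k v) = 1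
  b_pmf : ∀ (k : Fin K) (y r : Fin K → Bool), ∑ v : Bool, b k y (Function.update r k v) = 1
  a_local : ∀ (k : Fin K) (y y' : Fin K → Bool),
    (∀ j : Fin K, k.1 + 1 - m ≤ j.1 + 1 → j.1 ≤ k.1 → y j = y' j) → a k y = a k y'
  b_local : ∀ (k : Fin K) (y r y' r' : Fin K → Bool), r k = r' k →
    (∀ j : Fin K, k.1 + 1 - m ≤ j.1 + 1 → j.1 ≤ k.1 → y j = y' j) →
    (∀ j : Fin K, k.1 < j.1 → j.1 + 1 ≤ k.1 + 1 + m → obs y r j = obs y' r' j) →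
    b k y r = b k y' r'
  factor : ∀ y r, p y r = ∏ k : Fin K, a k y * b k y r
  sum_one : ∑ y : Fin K → Bool, ∑ r : Fin K → Bool, p y r = 1

/-- Real value of a binary outcome. -/
def yVal (v : Bool) : ℝ := if v then 1 else 0

/-- `cₖ(ȳᵐₖ, o̲ᵐₖ; α) = E[exp(α Yₖ) | Rₖ = 1, Ȳᵐₖ = ȳᵐₖ, O̲ᵐₖ = o̲ᵐₖ]` (`k` is 1-based). -/
noncomputable def cfun {K : ℕ} (p : (Fin K → Bool) → (Fin K → Bool) → ℝ) (m : ℕ) (α : ℝ)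
    (k : ℕ) (yv : ℕ → Bool) (ov : ℕ → Option Bool) : ℝ :=
  ∑ v : Bool, Real.exp (α * yVal v) *
    cPr p (Yeq k k (fun _ => v))
      (fun y r => Req k k (fun _ => true) y r ∧ Yeq (k - m) (k - 1) yv y r ∧
        Oeq (k + 1) (k + m) ov y r)

/-- The exponential tilting restriction with sensitivity parameters `α k` (`k` is 1-based):
`f(Yₖ | Rₖ = 0, Ȳᵐₖ, O̲ᵐₖ) = f(Yₖ | Rₖ = 1, Ȳᵐₖ, O̲ᵐₖ) · exp(αₖ Yₖ) / cₖ(Ȳᵐₖ, O̲ᵐₖ; αₖ)`. -/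
def Tilt {K : ℕ} (p : (Fin K → Bool) → (Fin K → Bool) → ℝ) (m : ℕ) (α : ℕ → ℝ) : Prop :=
  ∀ (k : ℕ), 1 ≤ k → k ≤ K → ∀ (yv : ℕ → Bool) (ov : ℕ → Option Bool),
    cPr p (Yeq k k yv)
      (fun y r => Req k k (fun _ => false) y r ∧ Yeq (k - m) (k - 1) yv y r ∧
        Oeq (k + 1) (k + m) ov y r)
    = cPr p (Yeq k k yv)
        (fun y r => Req k k (fun _ => true) y r ∧ Yeq (k - m) (k - 1) yv y r ∧
          Oeq (k + 1) (k + m) ov y r)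
      * Real.exp (α k * yVal (yv k)) / cfun p m (α k) k yv ov

/-! If the conditioning event fixes the last `m` outcomes before a split point and the first `m`
observed data after it, then every factor of the `m`th-order Markov factorization sees only one
side of the split, so exchanging the two halves of two configurations that both satisfy the
conditioning event preserves the product of their masses. Summing over all pairs of
configurations, this exchange turns `P(A ∧ B ∧ C) P(C)` into `P(A ∧ C) P(B ∧ C)` whenever `A`
only looks before the split and `B` only after it. -/

section Swap

variable {Ω : Type*} [Fintype Ω]

theorem sum_ite_and_mul_sum_ite_eq_of_swap (p : Ω → ℝ) (mix : Ω → Ω → Ω)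
    (mix_mix : ∀ w w', mix (mix w w') (mix w' w) = w) (A B C : Ω → Prop)
    (hA : ∀ w w', A (mix w w') ↔ A w) (hB : ∀ w w', B (mix w w') ↔ B w')
    (hC : ∀ w w', C (mix w w') ∧ C (mix w' w) ↔ C w ∧ C w')
    (hp : ∀ w w', C w → C w' → p (mix w w') * p (mix w' w) = p w * p w') :
    (∑ w, if (A w ∧ B w) ∧ C w then p w else 0) * (∑ w, if C w then p w else 0)
      = (∑ w, if A w ∧ C w then p w else 0) * (∑ w, if B w ∧ C w then p w else 0) := by
  let σ : Ω × Ω → Ω × Ω := fun z => (mix z.1 z.2, mix z.2 z.1)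
  have hσ : Function.Involutive σ := fun z => Prod.ext (mix_mix _ _) (mix_mix _ _)
  simp only [Finset.sum_mul_sum, ← Fintype.sum_prod_type', ite_zero_mul_ite_zero]
  refine (Fintype.sum_bijective σ hσ.bijective _ _ fun z => ?_).symm
  have hiff : ((A (σ z).1 ∧ B (σ z).1) ∧ C (σ z).1) ∧ C (σ z).2 ↔
      (A z.1 ∧ C z.1) ∧ B z.2 ∧ C z.2 := by
    have := hC z.1 z.2
    simp only [σ, hA, hB] at this ⊢
    tauto
  by_cases hz : (A z.1 ∧ C z.1) ∧ B z.2 ∧ C z.2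
  · rw [if_pos (hiff.2 hz), if_pos hz, hp _ _ hz.1.2 hz.2.2]
  · rw [if_neg (mt hiff.1 hz), if_neg hz]

end Swap

-- `s` counts 0-based indices, so `splice s` cuts between the 1-based positions `s` and `s + 1`
-- of the windows in `Yeq`, `Req` and `Oeq`.
def splice {α : Type*} {K : ℕ} (s : ℕ) (f g : Fin K → α) (j : Fin K) : α :=
  if j.1 < s then f j else g j

section Splice

variable {α : Type*} {K : ℕ} {s : ℕ}

theorem splice_of_lt (f g : Fin K → α) {j : Fin K} (h : j.1 < s) : splice s f g j = f j :=
  if_pos h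

theorem splice_of_le (f g : Fin K → α) {j : Fin K} (h : s ≤ j.1) : splice s f g j = g j :=
  if_neg (Nat.not_lt.2 h)

theorem splice_splice (f g : Fin K → α) : splice s (splice s f g) (splice s g f) = f := by
  funext j
  by_cases h : j.1 < s <;> simp [splice, h]

theorem obs_splice_of_lt (y r y' r' : Fin K → Bool) {j : Fin K} (h : j.1 < s) :
    obs (splice s y y') (splice s r r') j = obs y r j := by
  simp only [obs, splice_of_lt _ _ h]

theorem obs_splice_of_le (y r y' r' : Fin K → Bool) {j : Fin K} (h : s ≤ j.1) :
    obs (splice s y y') (splice s r r') j = obs y' r' j := by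
  simp only [obs, splice_of_le _ _ h]

end Splice

def AgreeOnSeparator {K : ℕ} (m s : ℕ) (y r y' r' : Fin K → Bool) : Prop :=
  (∀ j : Fin K, s ≤ j.1 + m → j.1 < s → y j = y' j) ∧
    ∀ j : Fin K, s ≤ j.1 → j.1 < s + m → obs y r j = obs y' r' j

theorem AgreeOnSeparator.symm {K m s : ℕ} {y r y' r' : Fin K → Bool}
    (h : AgreeOnSeparator m s y r y' r') : AgreeOnSeparator m s y' r' y r :=
  ⟨fun j h₁ h₂ => (h.1 j h₁ h₂).symm, fun j h₁ h₂ => (h.2 j h₁ h₂).symm⟩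

namespace Markov

variable {K m s : ℕ} (M : Markov K m) {k : Fin K} {y r y' r' : Fin K → Bool}

theorem a_splice_of_lt (hk : k.1 < s) :
    M.a k (splice s y y') = M.a k y :=
  M.a_local k _ _ fun _ _ hj => splice_of_lt _ _ (by omega)

theorem a_splice_of_le (hk : s ≤ k.1) (h : AgreeOnSeparator m s y r y' r') :
    M.a k (splice s y y') = M.a k y' := by
  refine M.a_local k _ _ fun j hj₁ hj₂ => ?_
  rcases Nat.lt_or_ge j.1 s with hj | hj
  · rw [splice_of_lt _ _ hj, h.1 j (by omega) hj]
  · exact splice_of_le _ _ hj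

theorem b_splice_of_lt (hk : k.1 < s) (h : AgreeOnSeparator m s y r y' r') :
    M.b k (splice s y y') (splice s r r') = M.b k y r := by
  refine M.b_local k _ _ _ _ (splice_of_lt _ _ hk) (fun _ _ hj => splice_of_lt _ _ (by omega))
    fun j hj₁ hj₂ => ?_
  rcases Nat.lt_or_ge j.1 s with hj | hj
  · exact obs_splice_of_lt _ _ _ _ hj
  · rw [obs_splice_of_le _ _ _ _ hj, h.2 j hj (by omega)]

theorem b_splice_of_le (hk : s ≤ k.1) (h : AgreeOnSeparator m s y r y' r') :
    M.b k (splice s y y') (splice s r r') = M.b k y' r' := by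
  refine M.b_local k _ _ _ _ (splice_of_le _ _ hk) (fun j hj₁ hj₂ => ?_)
    fun _ hj _ => obs_splice_of_le _ _ _ _ (by omega)
  rcases Nat.lt_or_ge j.1 s with hj | hj
  · rw [splice_of_lt _ _ hj, h.1 j (by omega) hj]
  · exact splice_of_le _ _ hj

theorem p_splice_mul_p_splice (h : AgreeOnSeparator m s y r y' r') :
    M.p (splice s y y') (splice s r r') * M.p (splice s y' y) (splice s r' r)
      = M.p y r * M.p y' r' := by
  simp only [M.factor, ← Finset.prod_mul_distrib]
  refine Finset.prod_congr rfl fun k _ => ?_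
  rcases Nat.lt_or_ge k.1 s with hk | hk
  · rw [M.a_splice_of_lt hk, M.a_splice_of_lt hk, M.b_splice_of_lt hk h,
      M.b_splice_of_lt hk h.symm]
  · rw [M.a_splice_of_le hk h, M.a_splice_of_le hk h.symm, M.b_splice_of_le hk h,
      M.b_splice_of_le hk h.symm]
    ring

end Markov

section Windows

variable {K : ℕ} (s : ℕ)

def DependsBefore (E : (Fin K → Bool) → (Fin K → Bool) → Prop) : Prop :=
  ∀ y r y' r', E (splice s y y') (splice s r r') ↔ E y r

def DependsFrom (E : (Fin K → Bool) → (Fin K → Bool) → Prop) : Prop :=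
  ∀ y r y' r', E (splice s y y') (splice s r r') ↔ E y' r'

variable {s} {lo hi : ℕ}

theorem Yeq_dependsBefore (yv : ℕ → Bool) (h : hi ≤ s) :
    DependsBefore s (Yeq (K := K) lo hi yv) := fun y r y' r' =>
  forall₃_congr fun j _ hj => by rw [splice_of_lt _ _ (by omega)]

theorem Req_dependsBefore (rv : ℕ → Bool) (h : hi ≤ s) :
    DependsBefore s (Req (K := K) lo hi rv) := fun y r y' r' =>
  forall₃_congr fun j _ hj => by rw [splice_of_lt _ _ (by omega)]

theorem Oeq_dependsFrom (ov : ℕ → Option Bool) (h : s < lo) :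
    DependsFrom s (Oeq (K := K) lo hi ov) := fun y r y' r' =>
  forall₃_congr fun j hj _ => by rw [obs_splice_of_le _ _ _ _ (by omega)]

theorem agreeOnSeparator_of_Yeq_of_Oeq {m lo' hi' : ℕ} {yv : ℕ → Bool} {ov : ℕ → Option Bool}
    (hlo : lo ≤ s + 1 - m) (hhi : s ≤ hi) (hlo' : lo' ≤ s + 1) (hhi' : s + m ≤ hi')
    {y r y' r' : Fin K → Bool} (hY : Yeq lo hi yv y r) (hO : Oeq lo' hi' ov y r)
    (hY' : Yeq lo hi yv y' r') (hO' : Oeq lo' hi' ov y' r') :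
    AgreeOnSeparator m s y r y' r' :=
  ⟨fun j h₁ h₂ => (hY j (by omega) (by omega)).trans (hY' j (by omega) (by omega)).symm,
    fun j h₁ h₂ => (hO j (by omega) (by omega)).trans (hO' j (by omega) (by omega)).symm⟩

end Windows

theorem Pr_eq_sum_prod {K : ℕ} (p : (Fin K → Bool) → (Fin K → Bool) → ℝ)
    (E : (Fin K → Bool) → (Fin K → Bool) → Prop) :
    Pr p E = ∑ w : (Fin K → Bool) × (Fin K → Bool), if E w.1 w.2 then p w.1 w.2 else 0 :=
  (Fintype.sum_prod_type' _).symm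

theorem div_eq_div_mul_div_of_mul_eq {a b c d : ℝ} (h : a * d = b * c) :
    a / d = b / d * (c / d) := by
  rcases eq_or_ne d 0 with rfl | hd
  · simp
  · field_simp
    linear_combination h

theorem Markov.cPr_and_eq_mul_cPr {K m : ℕ} (M : Markov K m) (s : ℕ)
    (A B L H : (Fin K → Bool) → (Fin K → Bool) → Prop)
    (hA : DependsBefore s A) (hL : DependsBefore s L) (hB : DependsFrom s B)
    (hH : DependsFrom s H)
    (hsep : ∀ y r y' r', L y r → H y r → L y' r' → H y' r' → AgreeOnSeparator m s y r y' r') :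
    cPr M.p (fun y r => A y r ∧ B y r) (fun y r => L y r ∧ H y r)
      = cPr M.p A (fun y r => L y r ∧ H y r) * cPr M.p B (fun y r => L y r ∧ H y r) := by
  have hLH : ∀ y r y' r', (L (splice s y y') (splice s r r') ∧ H (splice s y y') (splice s r r'))
      ∧ (L (splice s y' y) (splice s r' r) ∧ H (splice s y' y) (splice s r' r))
      ↔ (L y r ∧ H y r) ∧ (L y' r' ∧ H y' r') := by
    intro y r y' r'
    rw [hL, hL, hH, hH]
    tauto
  refine div_eq_div_mul_div_of_mul_eq ?_
  simp only [Pr_eq_sum_prod]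
  convert sum_ite_and_mul_sum_ite_eq_of_swap (fun w => M.p w.1 w.2)
    (fun w w' => (splice s w.1 w'.1, splice s w.2 w'.2))
    (fun _ _ => Prod.ext (splice_splice _ _) (splice_splice _ _)) (fun w => A w.1 w.2)
    (fun w => B w.1 w.2) (fun w => L w.1 w.2 ∧ H w.1 w.2)
    (fun w w' => hA _ _ _ _) (fun w w' => hB _ _ _ _) (fun w w' => hLH _ _ _ _)
    fun w w' hw hw' => M.p_splice_mul_p_splice (hsep _ _ _ _ hw.1 hw.2 hw'.1 hw'.2)

theorem statement19_general (M : Markov 7 2)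
    (rv : ℕ → Bool) (ovB : ℕ → Option Bool) (yv : ℕ → Bool) (ovC : ℕ → Option Bool) :
    cPr M.p (fun y r => Req 4 4 rv y r ∧ Oeq 7 7 ovB y r)
        (fun y r => Yeq 2 4 yv y r ∧ Oeq 5 6 ovC y r)
      = cPr M.p (Req 4 4 rv) (fun y r => Yeq 2 4 yv y r ∧ Oeq 5 6 ovC y r)
        * cPr M.p (Oeq 7 7 ovB) (fun y r => Yeq 2 4 yv y r ∧ Oeq 5 6 ovC y r) :=
  M.cPr_and_eq_mul_cPr 4 _ _ _ _ (Req_dependsBefore rv le_rfl) (Yeq_dependsBefore yv le_rfl)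
    (Oeq_dependsFrom ovB (by norm_num)) (Oeq_dependsFrom ovC (by norm_num))
    fun _ _ _ _ hY hO hY' hO' =>
      agreeOnSeparator_of_Yeq_of_Oeq (by norm_num) le_rfl le_rfl le_rfl hY hO hY' hO'

/-- Worked example, `K = 7`, `m = 2`, instance of Lemma 2.  Under the
`m`th-order Markov model with `K = 7` and `m = 2`, the response indicator `R₄` is
conditionally independent of `O₇` given `(Y₂, Y₃, Y₄, O₅, O₆)`. -/
theorem statement19 (M : Markov 7 2)
    (rv : ℕ → Bool) (ovB : ℕ → Option Bool) (yv : ℕ → Bool) (ovC : ℕ → Option Bool)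
    (hC : 0 < Pr M.p (fun y r => Yeq 2 4 yv y r ∧ Oeq 5 6 ovC y r)) :
    cPr M.p (fun y r => Req 4 4 rv y r ∧ Oeq 7 7 ovB y r)
        (fun y r => Yeq 2 4 yv y r ∧ Oeq 5 6 ovC y r)
      = cPr M.p (Req 4 4 rv) (fun y r => Yeq 2 4 yv y r ∧ Oeq 5 6 ovC y r)
        * cPr M.p (Oeq 7 7 ovB) (fun y r => Yeq 2 4 yv y r ∧ Oeq 5 6 ovC y r) :=
  statement19_general M rv ovB yv ovC

end MRM
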